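/- arXiv:2604.21745 — 2 statements merged into one kernel-verified Lean document; each statement's English description precedes it below -/
import Mathlib

section
/- Let F and G be CDFs of real-valued probability measures with generalized quantile functions Q_F and Q_G, and let U be uniformly distributed on (0,1). Then the pair (X,Y) = (Q_F(U), Q_G(1−U)) satisfies P(X ≤ x, Y ≤ y) = max{F(x) + G(y) − 1, 0} for all (x,y), and X has CDF F, Y has CDF G. -/
open MeasureTheory Set

/-- Generalized quantile (inverse CDF): `Q_F(u) = inf {x | F x ≥ u}`. -/
noncomputable def quantile (F : ℝ → ℝ) (u : ℝ) : ℝ := sInf {x | u ≤ F x}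

/-- CDF of a real random variable `X` under `P`. -/
noncomputable def cdfRV {Ω : Type*} [MeasurableSpace Ω] (P : Measure Ω) (X : Ω → ℝ) (x : ℝ) : ℝ :=
  (P {ω | X ω ≤ x}).toReal

/-- CDF of a measure on ℝ. -/
noncomputable def cdfOf (μ : Measure ℝ) (x : ℝ) : ℝ := (μ (Iic x)).toReal

/-- Uniform distribution on (0,1). -/
noncomputable def unif : Measure ℝ := volume.restrict (Ioo 0 1)

/-- 1-Wasserstein distance on ℝ: infimum over couplings of the expected distance. -/
noncomputable def W1 (μ ν : Measure ℝ) : ENNReal :=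
  ⨅ π ∈ {π : Measure (ℝ × ℝ) | π.map Prod.fst = μ ∧ π.map Prod.snd = ν},
    ∫⁻ p, ENNReal.ofReal |p.1 - p.2| ∂π

/-! For `u ∈ (0, 1)`, right continuity of a CDF `F` gives the Galois connection
`Q_F(u) ≤ x ↔ u ≤ F(x)`. Hence, up to the null event `U ∉ (0, 1)`, the event
`{Q_F(U) ≤ x, Q_G(1 - U) ≤ y}` is `{1 - G(y) ≤ U ≤ F(x)}`, of probability `(F(x) + G(y) - 1)⁺`;
the marginal statements are the cases `y = +∞` and `x = +∞` of the same computation. -/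

open Filter ProbabilityTheory Topology

theorem StieltjesFunction.le_apply_sInf (F : StieltjesFunction ℝ) {u : ℝ}
    (hne : {x | u ≤ F x}.Nonempty) (hbdd : BddBelow {x | u ≤ F x}) :
    u ≤ F (sInf {x | u ≤ F x}) := by
  set a := sInf {x | u ≤ F x}
  have h_above : ∀ᶠ t in 𝓝[>] a, u ≤ F t := by
    filter_upwards [self_mem_nhdsWithin] with t (ht : a < t)
    obtain ⟨s, hs, hst⟩ := (csInf_lt_iff hbdd hne).1 ht
    exact hs.trans (F.mono hst.le)
  exact ge_of_tendsto ((F.right_continuous a).mono Ioi_subset_Ici_self) h_above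

theorem StieltjesFunction.quantile_le_iff (F : StieltjesFunction ℝ) {u x : ℝ}
    (hne : {x | u ≤ F x}.Nonempty) (hbdd : BddBelow {x | u ≤ F x}) :
    quantile F u ≤ x ↔ u ≤ F x :=
  ⟨fun h => (F.le_apply_sInf hne hbdd).trans (F.mono h), fun h => csInf_le hbdd h⟩

theorem cdfOf_eq_cdf (μ : Measure ℝ) [IsProbabilityMeasure μ] : cdfOf μ = cdf μ :=
  funext fun x => (cdf_eq_real μ x).symm

theorem cdfOf_mem_Icc (μ : Measure ℝ) [IsProbabilityMeasure μ] (x : ℝ) :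
    cdfOf μ x ∈ Icc (0 : ℝ) 1 := by
  rw [cdfOf_eq_cdf]
  exact ⟨cdf_nonneg μ x, cdf_le_one μ x⟩

theorem quantile_cdfOf_le_iff (μ : Measure ℝ) [IsProbabilityMeasure μ] {u x : ℝ}
    (hu : u ∈ Ioo (0 : ℝ) 1) : quantile (cdfOf μ) u ≤ x ↔ u ≤ cdfOf μ x := by
  rw [cdfOf_eq_cdf]
  refine (cdf μ).quantile_le_iff ?_ ?_
  · exact ((tendsto_cdf_atTop μ).eventually (eventually_ge_nhds hu.2)).exists
  · obtain ⟨z, hz⟩ :=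
      eventually_atBot.1 ((tendsto_cdf_atBot μ).eventually (eventually_lt_nhds hu.1))
    exact ⟨z, fun s hs => le_of_not_ge fun hsz => (hz s hsz).not_ge hs⟩

theorem quantile_cdfOf_one_sub_le_iff (μ : Measure ℝ) [IsProbabilityMeasure μ] {u x : ℝ}
    (hu : u ∈ Ioo (0 : ℝ) 1) : quantile (cdfOf μ) (1 - u) ≤ x ↔ 1 - cdfOf μ x ≤ u := by
  rw [quantile_cdfOf_le_iff μ ⟨by linarith [hu.2], by linarith [hu.1]⟩]
  constructor <;> intro h <;> linarith

theorem unif_Icc {a b : ℝ} (ha : 0 ≤ a) (hb : b ≤ 1) :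
    unif (Icc a b) = ENNReal.ofReal (b - a) := by
  have h_ae : (Icc a b ∩ Ioo 0 1 : Set ℝ) =ᵐ[volume] Icc a b := by
    have := (EventuallyEq.refl _ (Icc a b)).inter (Ioo_ae_eq_Icc (μ := volume) (a := 0) (b := 1))
    rwa [inter_eq_left.2 (Icc_subset_Icc ha hb)] at this
  rw [unif, Measure.restrict_apply measurableSet_Icc, measure_congr h_ae, Real.volume_Icc]

theorem measure_setOf_eq_unif {Ω : Type*} [MeasurableSpace Ω] {P : Measure Ω} {U : Ω → ℝ}
    (hU : Measurable U) (hUnif : P.map U = unif) {p : ℝ → Prop} {D : Set ℝ}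
    (hD : MeasurableSet D) (hpD : ∀ u ∈ Ioo (0 : ℝ) 1, p u ↔ u ∈ D) :
    P {ω | p (U ω)} = unif D := by
  have h_mem : ∀ᵐ ω ∂P, U ω ∈ Ioo (0 : ℝ) 1 := by
    refine ae_of_ae_map hU.aemeasurable ?_
    rw [hUnif]
    exact ae_restrict_mem measurableSet_Ioo
  have h_ae : {ω | p (U ω)} =ᵐ[P] U ⁻¹' D := by
    filter_upwards [h_mem] with ω hω
    exact propext (hpD _ hω)
  rw [measure_congr h_ae, ← Measure.map_apply hU hD, hUnif]

theorem antimonotone_coupling_cdf_general {Ω : Type*} [MeasurableSpace Ω] (P : Measure Ω)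
    (μ ν : Measure ℝ) [IsProbabilityMeasure μ] [IsProbabilityMeasure ν]
    (U : Ω → ℝ) (hU : Measurable U) (hUnif : P.map U = unif) :
    (∀ x y : ℝ,
      (P {ω | quantile (cdfOf μ) (U ω) ≤ x ∧ quantile (cdfOf ν) (1 - U ω) ≤ y}).toReal
        = max (cdfOf μ x + cdfOf ν y - 1) 0) ∧
    (∀ x : ℝ, cdfRV P (fun ω => quantile (cdfOf μ) (U ω)) x = cdfOf μ x) ∧
    (∀ y : ℝ, cdfRV P (fun ω => quantile (cdfOf ν) (1 - U ω)) y = cdfOf ν y) := by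
  have hF := cdfOf_mem_Icc μ
  have hG := cdfOf_mem_Icc ν
  refine ⟨fun x y => ?_, fun x => ?_, fun y => ?_⟩
  · have h_event : ∀ u ∈ Ioo (0 : ℝ) 1,
        (quantile (cdfOf μ) u ≤ x ∧ quantile (cdfOf ν) (1 - u) ≤ y) ↔
          u ∈ Icc (1 - cdfOf ν y) (cdfOf μ x) := fun u hu => by
      rw [quantile_cdfOf_le_iff μ hu, quantile_cdfOf_one_sub_le_iff ν hu, mem_Icc, and_comm]
    rw [measure_setOf_eq_unif hU hUnif measurableSet_Icc h_event,
      unif_Icc (by linarith [(hG y).2]) (hF x).2, ENNReal.toReal_ofReal',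
      sub_sub_eq_add_sub]
  · have h_event : ∀ u ∈ Ioo (0 : ℝ) 1,
        quantile (cdfOf μ) u ≤ x ↔ u ∈ Icc 0 (cdfOf μ x) := fun u hu => by
      rw [quantile_cdfOf_le_iff μ hu, mem_Icc, and_iff_right hu.1.le]
    rw [cdfRV, measure_setOf_eq_unif hU hUnif measurableSet_Icc h_event,
      unif_Icc le_rfl (hF x).2, sub_zero, ENNReal.toReal_ofReal (hF x).1]
  · have h_event : ∀ u ∈ Ioo (0 : ℝ) 1,
        quantile (cdfOf ν) (1 - u) ≤ y ↔ u ∈ Icc (1 - cdfOf ν y) 1 := fun u hu => by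
      rw [quantile_cdfOf_one_sub_le_iff ν hu, mem_Icc, and_iff_left hu.2.le]
    rw [cdfRV, measure_setOf_eq_unif hU hUnif measurableSet_Icc h_event,
      unif_Icc (by linarith [(hG y).2]) le_rfl, sub_sub_cancel, ENNReal.toReal_ofReal (hG y).1]

theorem antimonotone_coupling_cdf {Ω : Type*} [MeasurableSpace Ω] (P : Measure Ω)
    [IsProbabilityMeasure P] (μ ν : Measure ℝ) [IsProbabilityMeasure μ] [IsProbabilityMeasure ν]
    (U : Ω → ℝ) (hU : Measurable U) (hUnif : P.map U = unif) :
    (∀ x y : ℝ,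
      (P {ω | quantile (cdfOf μ) (U ω) ≤ x ∧ quantile (cdfOf ν) (1 - U ω) ≤ y}).toReal
        = max (cdfOf μ x + cdfOf ν y - 1) 0) ∧
    (∀ x : ℝ, cdfRV P (fun ω => quantile (cdfOf μ) (U ω)) x = cdfOf μ x) ∧
    (∀ y : ℝ, cdfRV P (fun ω => quantile (cdfOf ν) (1 - U ω)) y = cdfOf ν y) :=
  antimonotone_coupling_cdf_general P μ ν U hU hUnif
end

section
/- Let μ and ν be probability measures on R with finite first moments, with CDFs F_μ, F_ν. Then the 1-Wasserstein distance satisfies W_1(μ,ν) ≥ ∫_R |F_μ(t) − F_ν(t)| dt. -/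
/-!
For any coupling `π` of `μ` and `ν`, the CDFs at `t` are the `π`-measures of `{x ≤ t}` and
`{y ≤ t}`, so `|F_μ t - F_ν t|` is at most the `π`-measure of the event that `t` separates `x`
from `y`. Integrating over `t` and swapping the integrals (Tonelli) turns this into
`∫ |x - y| dπ`, because the set of `t` separating `x` from `y` is an interval of length `|x - y|`.
-/

open MeasureTheory Set

open scoped symmDiff

theorem Real.volume_Ici_symmDiff_Ici (a b : ℝ) :
    volume (Ici a ∆ Ici b) = ENNReal.ofReal |a - b| := by
  wlog hab : a ≤ b generalizing a b
  · rw [symmDiff_comm, abs_sub_comm]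
    exact this b a (le_of_not_ge hab)
  rw [symmDiff_of_ge (Ici_subset_Ici.2 hab), Ici_sdiff_Ici, Real.volume_Ico,
    abs_of_nonpos (sub_nonpos.2 hab), neg_sub]

theorem lintegral_measure_symmDiff_setOf_le {α : Type*} [MeasurableSpace α] (π : Measure α)
    [SFinite π] {f g : α → ℝ} (hf : Measurable f) (hg : Measurable g) :
    ∫⁻ t, π ({x | f x ≤ t} ∆ {x | g x ≤ t}) = ∫⁻ x, ENNReal.ofReal |f x - g x| ∂π := by
  set E : Set (ℝ × α) := {q | f q.2 ≤ q.1} ∆ {q | g q.2 ≤ q.1}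
  have hE : MeasurableSet E :=
    (measurableSet_le (hf.comp measurable_snd) measurable_fst).symmDiff
      (measurableSet_le (hg.comp measurable_snd) measurable_fst)
  calc ∫⁻ t, π ({x | f x ≤ t} ∆ {x | g x ≤ t})
      = (volume.prod π) E := (Measure.prod_apply hE).symm
    _ = ∫⁻ x, volume (Ici (f x) ∆ Ici (g x)) ∂π := Measure.prod_apply_symm hE
    _ = ∫⁻ x, ENNReal.ofReal |f x - g x| ∂π := by
      simp only [Real.volume_Ici_symmDiff_Ici]

theorem cdfOf_map {α : Type*} [MeasurableSpace α] (π : Measure α) {f : α → ℝ}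
    (hf : Measurable f) (t : ℝ) : cdfOf (π.map f) t = π.real {x | f x ≤ t} := by
  rw [cdfOf, Measure.map_apply hf measurableSet_Iic]
  rfl

theorem lintegral_abs_cdfOf_map_sub_le {α : Type*} [MeasurableSpace α] (π : Measure α)
    [IsFiniteMeasure π] {f g : α → ℝ} (hf : Measurable f) (hg : Measurable g) :
    ∫⁻ t, ENNReal.ofReal |cdfOf (π.map f) t - cdfOf (π.map g) t|
      ≤ ∫⁻ x, ENNReal.ofReal |f x - g x| ∂π := by
  rw [← lintegral_measure_symmDiff_setOf_le π hf hg]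
  refine lintegral_mono fun t => ?_
  rw [cdfOf_map π hf, cdfOf_map π hg]
  exact ENNReal.ofReal_le_of_le_toReal <| abs_measureReal_sub_le_measureReal_symmDiff
    (measurableSet_le hf measurable_const).nullMeasurableSet
    (measurableSet_le hg measurable_const).nullMeasurableSet

theorem ofReal_integral_abs_le_lintegral {α : Type*} [MeasurableSpace α] (μ : Measure α)
    (h : α → ℝ) : ENNReal.ofReal (∫ x, |h x| ∂μ) ≤ ∫⁻ x, ENNReal.ofReal |h x| ∂μ := by
  have h_enorm := enorm_integral_le_lintegral_enorm (μ := μ) fun x => |h x|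
  simp only [Real.enorm_eq_ofReal_abs, abs_abs] at h_enorm
  rwa [abs_of_nonneg (integral_nonneg fun x => abs_nonneg (h x))] at h_enorm

theorem W1_ge_cdf_integral_general (μ ν : Measure ℝ)
    [IsProbabilityMeasure μ] :
    ENNReal.ofReal (∫ t : ℝ, |cdfOf μ t - cdfOf ν t|) ≤ W1 μ ν := by
  refine le_iInf₂ fun π ⟨hμ, hν⟩ => ?_
  have : IsProbabilityMeasure (π.map Prod.fst) := hμ ▸ inferInstance
  have : IsProbabilityMeasure π := Measure.isProbabilityMeasure_of_map Prod.fst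
  subst hμ hν
  exact (ofReal_integral_abs_le_lintegral volume _).trans
    (lintegral_abs_cdfOf_map_sub_le π measurable_fst measurable_snd)

theorem W1_ge_cdf_integral (μ ν : Measure ℝ)
    [IsProbabilityMeasure μ] [IsProbabilityMeasure ν]
    (hμ : Integrable id μ) (hν : Integrable id ν) :
    ENNReal.ofReal (∫ t : ℝ, |cdfOf μ t - cdfOf ν t|) ≤ W1 μ ν :=
  W1_ge_cdf_integral_general μ ν
end
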